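/- Let ω_1 ≤ ω_2 ≤ … ≤ ω_N be real numbers, on a symmetric connected network. Then Σ_{i=2}^N Σ_{j=1,…,i−1 with ψ_{ij}>0} (ω_j − ω_i) ≤ −(ω_N − ω_1), and Σ_{i=1}^{N−1} Σ_{j=i+1,…,N with ψ_{ij}>0} (ω_j − ω_i) ≥ ω_N − ω_1. -/

import Mathlib

/-! Monotonicity turns each summand `ω j - ω i` with `i < j` into `|ω j - ω i|`, so the upper sum
is the variation of `ω` over the edges of the network, each edge counted once, and by symmetry
of `ψ` the lower sum is its negative. The triangle inequality along a path from the first to the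
last vertex, whose edges are distinct, bounds `ω_N - ω_1` by that variation. -/

open Real Finset

/-- Diameter: max minus min of a finite family of reals. -/
noncomputable def diam {N : ℕ} (v : Fin N → ℝ) : ℝ := (⨆ i, v i) - (⨅ i, v i)

/-- `S_c = Σ_{n=0}^{N-1} c^n`. -/
noncomputable def Sc (N : ℕ) (c : ℝ) : ℝ := ∑ n ∈ Finset.range N, c ^ n

/-- `Y_c(z)`: difference of the two convex-type combinations of the nondecreasing
rearrangement of `z` (weights `c^{i-1}` and `c^{N-i}`), divided by `S_c`. -/
noncomputable def Yc {N : ℕ} (c : ℝ) (z : Fin N → ℝ) : ℝ :=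
  (∑ i : Fin N, c ^ (i : ℕ) * z (Tuple.sort z i) -
   ∑ i : Fin N, c ^ (N - 1 - (i : ℕ)) * z (Tuple.sort z i)) / Sc N c

/-- The interaction graph: `i` and `j` adjacent iff `i ≠ j` and the (symmetric) weight
`ψ i j` is positive. -/
def netGraph {N : ℕ} (ψ : Fin N → Fin N → ℝ) : SimpleGraph (Fin N) where
  Adj i j := i ≠ j ∧ 0 < ψ i j ∧ 0 < ψ j i
  symm := ⟨fun _ _ h => ⟨h.1.symm, h.2.2, h.2.1⟩⟩
  loopless := ⟨fun _ h => h.1 rfl⟩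

namespace SimpleGraph
variable {V : Type*} {G : SimpleGraph V}

def edgeVariation (f : V → ℝ) : Sym2 V → ℝ :=
  Sym2.lift ⟨fun x y => |f x - f y|, fun _ _ => abs_sub_comm _ _⟩

@[simp] lemma edgeVariation_mk (f : V → ℝ) (x y : V) : edgeVariation f s(x, y) = |f x - f y| := rfl

lemma edgeVariation_nonneg (f : V → ℝ) (e : Sym2 V) : 0 ≤ edgeVariation f e := by
  induction e using Sym2.ind with | _ x y => exact abs_nonneg _

lemma edgeVariation_mk_of_le [Preorder V] {f : V → ℝ} (hf : Monotone f) {x y : V} (h : x ≤ y) :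
    edgeVariation f s(x, y) = f y - f x := by
  rw [edgeVariation_mk, abs_sub_comm, abs_of_nonneg (sub_nonneg.mpr (hf h))]

lemma Walk.sub_le_sum_edgeVariation (f : V → ℝ) {u v : V} (p : G.Walk u v) :
    f v - f u ≤ (p.edges.map (edgeVariation f)).sum := by
  induction p with
  | nil => simp
  | @cons u w v _ p ih =>
    rw [edges_cons, List.map_cons, List.sum_cons, edgeVariation_mk]
    linarith [neg_abs_le (f u - f w)]

lemma Walk.IsPath.sum_edgeVariation_le [Fintype G.edgeSet] (f : V → ℝ) {u v : V}
    {p : G.Walk u v} (hp : p.IsPath) :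
    (p.edges.map (edgeVariation f)).sum ≤ ∑ e ∈ G.edgeFinset, edgeVariation f e := by
  classical
  rw [← List.sum_toFinset _ hp.edges_nodup]
  refine sum_le_sum_of_subset_of_nonneg (fun e he => ?_) fun e _ _ => edgeVariation_nonneg f e
  rw [mem_edgeFinset]
  exact p.edges_subset_edgeSet (List.mem_toFinset.mp he)

lemma Reachable.sub_le_sum_edgeVariation [Fintype G.edgeSet] (f : V → ℝ) {u v : V}
    (h : G.Reachable u v) : f v - f u ≤ ∑ e ∈ G.edgeFinset, edgeVariation f e := by
  classical
  obtain ⟨p⟩ := h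
  exact (p.bypass.sub_le_sum_edgeVariation f).trans
    (p.bypass_isPath.sum_edgeVariation_le f)

lemma sum_edgeFinset_eq_sum_sum_lt [LinearOrder V] [Fintype V] [DecidableRel G.Adj]
    {M : Type*} [AddCommMonoid M] (F : Sym2 V → M) :
    ∑ e ∈ G.edgeFinset, F e = ∑ i, ∑ j with i < j ∧ G.Adj i j, F s(i, j) := by
  rw [← sum_finset_product' (univ.filter fun x : V × V => x.1 < x.2 ∧ G.Adj x.1 x.2) _ _
    (by simp)]
  symm
  refine sum_bij (fun x _ => s(x.1, x.2)) (by simp) ?_ ?_ (fun _ _ => rfl)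
  · rintro ⟨a, b⟩ hab ⟨c, d⟩ hcd h
    simp only [mem_filter, mem_univ, true_and] at hab hcd
    rcases Sym2.eq_iff.mp h with h | ⟨rfl, rfl⟩
    · simpa using h
    · exact absurd (hab.1.trans hcd.1) (lt_irrefl _)
  · intro e he
    induction e using Sym2.ind with | _ x y => ?_
    rw [mem_edgeFinset, mem_edgeSet] at he
    rcases lt_or_gt_of_ne he.ne with hxy | hyx
    · exact ⟨(x, y), by simp [hxy, he], rfl⟩
    · exact ⟨(y, x), by simp [hyx, he.symm], Sym2.eq_swap⟩

end SimpleGraph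

lemma Finset.sum_sum_filter_lt_comm {ι M : Type*} [Fintype ι] [LinearOrder ι] [AddCommMonoid M]
    {p : ι → ι → Prop} [DecidableRel p] (hp : ∀ i j, p i j ↔ p j i) (F : ι → ι → M) :
    ∑ i, ∑ j with j < i ∧ p i j, F i j = ∑ i, ∑ j with i < j ∧ p i j, F j i := by
  simp only [sum_filter]
  rw [sum_comm]
  exact sum_congr rfl fun i _ => sum_congr rfl fun j _ => by simp only [hp j i]

lemma netGraph_adj_iff {N : ℕ} {ψ : Fin N → Fin N → ℝ} (hψsym : ∀ i j, ψ i j = ψ j i)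
    {i j : Fin N} : (netGraph ψ).Adj i j ↔ i ≠ j ∧ 0 < ψ i j := by
  simp [netGraph, hψsym j i]

/-- key dissipation estimate for ordered frequencies on a connected network. -/
theorem stmt6 {N : ℕ} (hN : 2 ≤ N) (ω : Fin N → ℝ) (hmono : Monotone ω)
    (ψ : Fin N → Fin N → ℝ) (hψsym : ∀ i j, ψ i j = ψ j i)
    (hconn : (netGraph ψ).Connected) :
    (∑ i : Fin N, ∑ j ∈ Finset.univ.filter (fun j => j < i ∧ 0 < ψ i j), (ω j - ω i))
      ≤ - (ω ⟨N - 1, by omega⟩ - ω ⟨0, by omega⟩) ∧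
    ω ⟨N - 1, by omega⟩ - ω ⟨0, by omega⟩ ≤
      ∑ i : Fin N, ∑ j ∈ Finset.univ.filter (fun j => i < j ∧ 0 < ψ i j), (ω j - ω i) := by
  classical
  set upper := ∑ i : Fin N, ∑ j ∈ Finset.univ.filter (fun j => i < j ∧ 0 < ψ i j), (ω j - ω i)
  have hupper : upper = ∑ e ∈ (netGraph ψ).edgeFinset, SimpleGraph.edgeVariation ω e := by
    rw [SimpleGraph.sum_edgeFinset_eq_sum_sum_lt]
    refine sum_congr rfl fun i _ => ?_
    have hfilter : univ.filter (fun j => i < j ∧ 0 < ψ i j)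
        = univ.filter (fun j => i < j ∧ (netGraph ψ).Adj i j) :=
      filter_congr fun j _ => and_congr_right fun hij =>
        ((netGraph_adj_iff hψsym).trans (and_iff_right hij.ne)).symm
    rw [hfilter]
    exact sum_congr rfl fun j hj =>
      (SimpleGraph.edgeVariation_mk_of_le hmono (mem_filter.mp hj).2.1.le).symm
  have hlower : ∑ i : Fin N, ∑ j ∈ Finset.univ.filter (fun j => j < i ∧ 0 < ψ i j), (ω j - ω i)
      = -upper := by
    rw [sum_sum_filter_lt_comm (fun i j => by rw [hψsym]), ← sum_neg_distrib]
    simp only [← sum_neg_distrib, neg_sub]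
  have hdiff : ω ⟨N - 1, by omega⟩ - ω ⟨0, by omega⟩ ≤ upper :=
    hupper ▸ (hconn.preconnected _ _).sub_le_sum_edgeVariation ω
  exact ⟨by linarith, hdiff⟩
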